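/- Let k ≥ 3 and t ≥ k³ be integers, G a group, and ξ: Pol(K_k, K_t) → Pol(ℤ, G) a minion homomorphism. Then any two ternary polymorphisms f, g ∈ Pol(K_k, K_t) of the same type (i.e., with f(x, x, x) = g(x, x, x) for all x ∈ [k]) have the same image under ξ, i.e., ξ(f) = ξ(g). -/

import Mathlib

/-- `f : [k]ⁿ → [t]` is a polymorphism of the pair of complete graphs
`(K_k, K_t)` (with the binary disequality relation): it maps tuples that are
coordinatewise distinct to distinct values. -/
def IsCliquePoly (k t : ℕ) {n : ℕ} (f : (Fin n → Fin k) → Fin t) : Prop :=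
  ∀ x y : Fin n → Fin k, (∀ j, x j ≠ y j) → f x ≠ f y

/-!
A minion homomorphism `ξ` into `Pol(ℤ, G)` cannot tell apart two ternary polymorphisms `f, f'`
of `(K_k, K_t)` that differ only at one non-constant triple `a`. Pick a coordinate `i` with
`a i ≠ a j` and `a i ≠ a j'` for `j ≠ j'`, and let `F(x, y) = f'(x)` if `y = x i` and `f(x)`
otherwise; `F` is a 4-ary polymorphism, `f` is its minor `y := x j` as well as `y := x j'`, and
`f'` is its minor `y := x i`. Since `ξ F` is a homomorphism `ℤ⁴ → G`, the first two minors show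
that `ξ F` kills the last coordinate, hence `ξ f = ξ f'`.

It remains to connect any two polymorphisms of the same type by such single-point recolourings.
Since `t > (k - 1)³ + 1`, a fresh colour avoiding the values on all neighbours of a triple is
always available: to give `a` the colour `g a` we first recolour freshly every neighbour of `a`
carrying that colour, and then recolour `a`. Neither step creates new disagreements with `g`.
-/

open Finset Function

abbrev CliquePol (k t n : ℕ) := {f : (Fin n → Fin k) → Fin t // IsCliquePoly k t f}

variable {k t n : ℕ}

section Recolouring

def cliqueNeighbours (b : Fin n → Fin k) : Finset (Fin n → Fin k) :=
  Fintype.piFinset fun l => {b l}ᶜ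

@[simp]
lemma mem_cliqueNeighbours {b x : Fin n → Fin k} :
    x ∈ cliqueNeighbours b ↔ ∀ l, x l ≠ b l := by
  simp [cliqueNeighbours]

lemma card_cliqueNeighbours (b : Fin n → Fin k) : #(cliqueNeighbours b) = (k - 1) ^ n := by
  simp [cliqueNeighbours, Fintype.card_piFinset, card_compl]

lemma IsCliquePoly.update {f : (Fin n → Fin k) → Fin t} (hf : IsCliquePoly k t f)
    {a : Fin n → Fin k} {c : Fin t} (hc : ∀ y ∈ cliqueNeighbours a, f y ≠ c) :
    IsCliquePoly k t (Function.update f a c) := by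
  intro x y hxy
  by_cases hx : x = a
  · subst hx
    have hy : y ≠ x := fun hy => hf x y hxy (by rw [hy])
    rw [update_self, update_of_ne hy]
    exact (hc y (mem_cliqueNeighbours.2 fun l => (hxy l).symm)).symm
  · rw [update_of_ne hx]
    by_cases hy : y = a
    · subst hy
      rw [update_self]
      exact hc x (mem_cliqueNeighbours.2 hxy)
    · rw [update_of_ne hy]
      exact hf x y hxy

lemma exists_fresh_colour (ht : (k - 1) ^ n + 1 < t) (f : (Fin n → Fin k) → Fin t)
    (b : Fin n → Fin k) (c : Fin t) : ∃ c' ≠ c, ∀ y ∈ cliqueNeighbours b, f y ≠ c' := by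
  have hcard : #(insert c ((cliqueNeighbours b).image f)) < #(univ : Finset (Fin t)) :=
    calc #(insert c ((cliqueNeighbours b).image f))
        ≤ #((cliqueNeighbours b).image f) + 1 := card_insert_le _ _
      _ ≤ (k - 1) ^ n + 1 := by
        rw [← card_cliqueNeighbours b]
        gcongr
        exact card_image_le
      _ < #(univ : Finset (Fin t)) := by simpa using ht
  obtain ⟨c', -, hc'⟩ := exists_mem_notMem_of_card_lt_card hcard
  simp only [mem_insert, mem_image, not_or, not_exists, not_and] at hc'
  exact ⟨c', hc'.1, fun y hy => hc'.2 y hy⟩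

def IsSinglePointRecolouring (f f' : CliquePol k t n) : Prop :=
  ∃ a : Fin n → Fin k, (∀ c, a ≠ fun _ => c) ∧ ∀ x ≠ a, f.1 x = f'.1 x

lemma isSinglePointRecolouring_update (f : CliquePol k t n) {a : Fin n → Fin k}
    (ha : ∀ c, a ≠ fun _ => c) {c : Fin t} (hc : ∀ y ∈ cliqueNeighbours a, f.1 y ≠ c) :
    IsSinglePointRecolouring f ⟨Function.update f.1 a c, f.2.update hc⟩ :=
  ⟨a, ha, fun _ hx => (update_of_ne hx _ _).symm⟩

lemma exists_eqvGen_forall_neighbours_ne (ht : (k - 1) ^ n + 1 < t) (a : Fin n → Fin k)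
    (c : Fin t) (f : CliquePol k t n)
    (hconst : ∀ y ∈ cliqueNeighbours a, f.1 y = c → ∀ c₀, y ≠ fun _ => c₀) :
    ∃ f' : CliquePol k t n, Relation.EqvGen IsSinglePointRecolouring f f' ∧
      (∀ y ∈ cliqueNeighbours a, f'.1 y ≠ c) ∧
      ∀ x, f'.1 x ≠ f.1 x → x ∈ cliqueNeighbours a ∧ f.1 x = c := by
  induction hm : #((cliqueNeighbours a).filter (f.1 · = c)) using Nat.strong_induction_on
    generalizing f with
  | _ m ih =>
  by_cases hfree : ∀ y ∈ cliqueNeighbours a, f.1 y ≠ c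
  · exact ⟨f, .refl f, hfree, fun x hx => absurd rfl hx⟩
  push Not at hfree
  obtain ⟨b, hb, hbc⟩ := hfree
  obtain ⟨c', hc'c, hc'⟩ := exists_fresh_colour ht f.1 b c
  set f₁ : CliquePol k t n := ⟨Function.update f.1 b c', f.2.update hc'⟩
  have hf₁ : ∀ x, f₁.1 x = c → x ≠ b ∧ f.1 x = c := by
    intro x hx
    have hxb : x ≠ b := by rintro rfl; exact hc'c (by simpa [f₁] using hx)
    exact ⟨hxb, by simpa [f₁, update_of_ne hxb] using hx⟩
  have hlt : #((cliqueNeighbours a).filter (f₁.1 · = c)) < m := by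
    rw [← hm]
    refine card_lt_card ((ssubset_iff_of_subset fun x hx => ?_).2 ⟨b, mem_filter.2 ⟨hb, hbc⟩, ?_⟩)
    · rw [mem_filter] at hx ⊢
      exact ⟨hx.1, (hf₁ x hx.2).2⟩
    · simp [f₁, hc'c]
  obtain ⟨f', hf₁f', hf'free, hf'changed⟩ :=
    ih _ hlt f₁ (fun y hy hy₁ => hconst y hy (hf₁ y hy₁).2) rfl
  refine ⟨f', .trans _ _ _ (.rel _ _ ?_) hf₁f', hf'free, fun x hx => ?_⟩
  · exact isSinglePointRecolouring_update f (hconst b hb hbc) hc'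
  by_cases hxb : x = b
  · exact hxb ▸ ⟨hb, hbc⟩
  · have hf₁x : f₁.1 x = f.1 x := update_of_ne hxb _ _
    rw [← hf₁x] at hx ⊢
    exact hf'changed x hx

theorem eqvGen_isSinglePointRecolouring_of_same_type (ht : (k - 1) ^ n + 1 < t)
    (f g : CliquePol k t n) (htype : ∀ c, f.1 (fun _ => c) = g.1 (fun _ => c)) :
    Relation.EqvGen IsSinglePointRecolouring f g := by
  induction hm : hammingDist f.1 g.1 using Nat.strong_induction_on generalizing f with
  | _ m ih =>
  by_cases hfg : f = g
  · exact hfg ▸ .refl f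
  obtain ⟨a, ha⟩ : ∃ a, f.1 a ≠ g.1 a := by
    by_contra! h
    exact hfg (Subtype.ext (funext h))
  have ha_nonconst : ∀ c, a ≠ fun _ => c := by rintro c rfl; exact ha (htype c)
  have hg_nbr : ∀ y ∈ cliqueNeighbours a, g.1 y ≠ g.1 a :=
    fun y hy => g.2 y a (mem_cliqueNeighbours.1 hy)
  obtain ⟨f₁, hff₁, hf₁free, hf₁changed⟩ :=
    exists_eqvGen_forall_neighbours_ne ht a (g.1 a) f fun y hy hfy c hyc =>
      hg_nbr y hy (by rw [← hfy, hyc, htype c])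
  set f₂ : CliquePol k t n := ⟨Function.update f₁.1 a (g.1 a), f₁.2.update hf₁free⟩
  -- Recolouring the neighbours of `a` only touched points where `f` already disagreed with `g`.
  have hsub : univ.filter (fun x => f₂.1 x ≠ g.1 x) ⊆
      (univ.filter fun x => f.1 x ≠ g.1 x).erase a := by
    intro x hx
    have hxa : x ≠ a := by rintro rfl; simp [f₂] at hx
    have hf₁x : f₁.1 x ≠ g.1 x := by simpa [f₂, update_of_ne hxa] using hx
    refine mem_erase.2 ⟨hxa, mem_filter.2 ⟨mem_univ x, fun hfx => ?_⟩⟩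
    by_cases hchanged : f₁.1 x = f.1 x
    · exact hf₁x (hchanged.trans hfx)
    · obtain ⟨hx_nbr, hx_col⟩ := hf₁changed x hchanged
      exact hg_nbr x hx_nbr (hfx ▸ hx_col)
  have hlt : hammingDist f₂.1 g.1 < m := by
    rw [← hm]
    exact (card_le_card hsub).trans_lt (card_erase_lt_of_mem (by simpa using ha))
  have htype₂ : ∀ c, f₂.1 (fun _ => c) = g.1 (fun _ => c) := by
    intro c
    by_contra hc
    have := mem_of_mem_erase (hsub (mem_filter.2 ⟨mem_univ _, hc⟩))
    exact (mem_filter.1 this).2 (htype c)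
  exact .trans _ _ _ hff₁ (.trans _ _ _
    (.rel _ _ (isSinglePointRecolouring_update f₁ ha_nonconst hf₁free)) (ih _ hlt f₂ htype₂ rfl))

end Recolouring

section MinionHom

variable {G : Type*} [Group G]

structure IsPolZMinionHom (ξ : ∀ n : ℕ, CliquePol k t n → (Fin n → ℤ) → G) : Prop where
  map_add : ∀ n f, ∀ x y : Fin n → ℤ, ξ n f (x + y) = ξ n f x * ξ n f y
  map_minor : ∀ (n n' : ℕ) (π : Fin n → Fin n') (f : CliquePol k t n) (g : CliquePol k t n'),
    (∀ x, g.1 x = f.1 (fun j => x (π j))) → ∀ x, ξ n' g x = ξ n f (fun j => x (π j))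

lemma map_single_eq_one_of_map_single_one {ι : Type*} [DecidableEq ι] {φ : (ι → ℤ) → G}
    (hφ : ∀ x y, φ (x + y) = φ x * φ y) {l : ι} (h1 : φ (Pi.single l 1) = 1) (d : ℤ) :
    φ (Pi.single l d) = 1 := by
  let ψ : ℤ →+ Additive G := AddMonoidHom.mk' (fun d => Additive.ofMul (φ (Pi.single l d)))
    fun d e => by rw [Pi.single_add, hφ]; rfl
  exact congrArg Additive.toMul (DFunLike.congr_fun (AddMonoidHom.ext_int (f := ψ) (g := 0) h1) d)

lemma Fin.snoc_eq_snoc_add_single {α : Type*} [AddCommGroup α] (x : Fin n → α) (d d' : α) :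
    (Fin.snoc x d : Fin (n + 1) → α) = Fin.snoc x d' + Pi.single (Fin.last n) (d - d') := by
  ext l
  refine Fin.lastCases ?_ (fun i => ?_) l <;> simp

def interpolate (f f' : (Fin n → Fin k) → Fin t) (i : Fin n) (y : Fin (n + 1) → Fin k) : Fin t :=
  if y (Fin.last n) = y i.castSucc then f' (Fin.init y) else f (Fin.init y)

lemma interpolate_snoc (f f' : (Fin n → Fin k) → Fin t) (i m : Fin n) (x : Fin n → Fin k) :
    interpolate f f' i (Fin.snoc x (x m)) = if x m = x i then f' x else f x := by
  simp [interpolate]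

lemma isCliquePoly_interpolate {f f' : (Fin n → Fin k) → Fin t} (hf : IsCliquePoly k t f)
    (hf' : IsCliquePoly k t f') {a : Fin n → Fin k} (h : ∀ x ≠ a, f x = f' x) (i : Fin n) :
    IsCliquePoly k t (interpolate f f' i) := by
  have key : ∀ y z : Fin (n + 1) → Fin k, (∀ l, y l ≠ z l) → Fin.init z ≠ a →
      interpolate f f' i y ≠ interpolate f f' i z := by
    intro y z hyz hz
    have hinit : ∀ l, Fin.init y l ≠ Fin.init z l := fun l => hyz _
    have hFz : interpolate f f' i z = f (Fin.init z) := by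
      unfold interpolate
      split_ifs
      exacts [(h _ hz).symm, rfl]
    rw [hFz]
    unfold interpolate
    split_ifs
    · rw [h _ hz]
      exact hf' _ _ hinit
    · exact hf _ _ hinit
  intro y z hyz
  by_cases hz : Fin.init z = a
  · have hy : Fin.init y ≠ a := fun hy => hyz i.castSucc (congrFun (hy.trans hz.symm) i)
    exact (key z y (fun l => (hyz l).symm) hy).symm
  · exact key y z hyz hz

variable {ξ : ∀ n : ℕ, CliquePol k t n → (Fin n → ℤ) → G}

lemma IsPolZMinionHom.apply_eq_apply_snoc (hξ : IsPolZMinionHom ξ) {F : CliquePol k t (n + 1)}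
    {f : CliquePol k t n} {m : Fin n} (h : ∀ x, f.1 x = F.1 (Fin.snoc x (x m)))
    (x : Fin n → ℤ) : ξ n f x = ξ (n + 1) F (Fin.snoc x (x m)) := by
  have hπ : ∀ {α : Type} (x : Fin n → α),
      (fun j => x (Fin.snoc (α := fun _ => Fin n) (fun l => l) m j)) = Fin.snoc x (x m) :=
    fun x => Fin.comp_snoc x _ m
  rw [← hπ]
  exact hξ.map_minor _ _ _ F f (fun x => by rw [hπ]; exact h x) x

theorem IsPolZMinionHom.eq_of_eq_off_point (hξ : IsPolZMinionHom ξ) {f f' : CliquePol k t n}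
    {a : Fin n → Fin k} (h : ∀ x ≠ a, f.1 x = f'.1 x) {i j j' : Fin n}
    (hij : a i ≠ a j) (hij' : a i ≠ a j') (hjj' : j ≠ j') : ξ n f = ξ n f' := by
  set F : CliquePol k t (n + 1) := ⟨interpolate f.1 f'.1 i, isCliquePoly_interpolate f.2 f'.2 h i⟩
  have hf_minor : ∀ m, a i ≠ a m → ∀ x, ξ n f x = ξ (n + 1) F (Fin.snoc x (x m)) := by
    refine fun m hm => hξ.apply_eq_apply_snoc fun x => ?_
    simp only [F, interpolate_snoc]
    split_ifs with hx
    · exact h x (by rintro rfl; exact hm hx.symm)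
    · rfl
  have hf'_minor : ∀ x, ξ n f' x = ξ (n + 1) F (Fin.snoc x (x i)) :=
    hξ.apply_eq_apply_snoc fun x => by simp [F, interpolate_snoc]
  set φ := ξ (n + 1) F
  have hφ : ∀ x y, φ (x + y) = φ x * φ y := hξ.map_add _ F
  have hφ_shift : ∀ (x : Fin n → ℤ) (d d' : ℤ),
      φ (Fin.snoc x d) = φ (Fin.snoc x d') * φ (Pi.single (Fin.last n) (d - d')) := by
    intro x d d'
    rw [Fin.snoc_eq_snoc_add_single x d d', hφ]
  -- `f` is both the minor `y := x j` and the minor `y := x j'` of `F`.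
  have hφ_one : φ (Pi.single (Fin.last n) 1) = 1 := by
    set x₀ : Fin n → ℤ := Pi.single j 1
    have hjj := (hf_minor j hij x₀).symm.trans (hf_minor j' hij' x₀)
    have hx₀ : x₀ j - x₀ j' = 1 := by simp [x₀, hjj'.symm]
    rw [hφ_shift _ _ (x₀ j'), hx₀] at hjj
    exact mul_eq_left.1 hjj
  funext x
  rw [hf_minor j hij, hf'_minor, hφ_shift _ _ (x i),
    map_single_eq_one_of_map_single_one hφ hφ_one, mul_one]

lemma exists_ne_ne_of_ne_const {α : Type*} (a : Fin 3 → α) (ha : ∀ c, a ≠ fun _ => c) :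
    ∃ i j j', a i ≠ a j ∧ a i ≠ a j' ∧ j ≠ j' := by
  by_contra! h
  apply ha (a 0)
  funext l
  fin_cases l <;> grind [h 0 1 2, h 1 0 2, h 2 0 1]

theorem IsPolZMinionHom.eq_of_isSinglePointRecolouring (hξ : IsPolZMinionHom ξ)
    {f f' : CliquePol k t 3} (h : IsSinglePointRecolouring f f') : ξ 3 f = ξ 3 f' := by
  obtain ⟨a, ha, hfa⟩ := h
  obtain ⟨i, j, j', hij, hij', hjj'⟩ := exists_ne_ne_of_ne_const a ha
  exact hξ.eq_of_eq_off_point hfa hij hij' hjj'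

end MinionHom

lemma pred_pow_three_add_one_lt (hk : 2 ≤ k) : (k - 1) ^ 3 + 1 < k ^ 3 := by
  obtain ⟨m, rfl⟩ : ∃ m, k = m + 1 := ⟨k - 1, by omega⟩
  simp only [Nat.add_sub_cancel]
  nlinarith [Nat.mul_le_mul hk hk]

/-- for `k ≥ 3`, `t ≥ k³`, a group `G` and a minion homomorphism
`ξ : Pol(K_k, K_t) → Pol(ℤ, G)`, any two ternary polymorphisms of the same type
(equal on constant tuples) have the same image under `ξ`. -/
theorem minion_hom_eq_on_ternary_of_same_type (k t : ℕ) (hk : 3 ≤ k)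
    (ht : k ^ 3 ≤ t) {G : Type*} [Group G]
    (ξ : ∀ n : ℕ, {f : (Fin n → Fin k) → Fin t // IsCliquePoly k t f} →
        ((Fin n → ℤ) → G))
    (hhom : ∀ n f, ∀ x y : Fin n → ℤ, ξ n f (x + y) = ξ n f x * ξ n f y)
    (hminor : ∀ (n n' : ℕ) (π : Fin n → Fin n')
        (f : {f : (Fin n → Fin k) → Fin t // IsCliquePoly k t f})
        (g : {g : (Fin n' → Fin k) → Fin t // IsCliquePoly k t g}),
        (∀ x, g.1 x = f.1 (fun j => x (π j))) →
        ∀ x, ξ n' g x = ξ n f (fun j => x (π j)))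
    (f g : {f : (Fin 3 → Fin k) → Fin t // IsCliquePoly k t f})
    (htype : ∀ x : Fin k, f.1 (fun _ => x) = g.1 (fun _ => x)) :
    ξ 3 f = ξ 3 g := by
  have hξ : IsPolZMinionHom ξ := ⟨hhom, hminor⟩
  have ht' : (k - 1) ^ 3 + 1 < t := (pred_pow_three_add_one_lt (by omega)).trans_le ht
  have hfg := eqvGen_isSinglePointRecolouring_of_same_type ht' f g htype
  exact (InvImage.equivalence _ (ξ 3) eq_equivalence).eqvGen_iff.1
    (Relation.EqvGen.mono (p := fun f f' => ξ 3 f = ξ 3 f')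
      (fun _ _ => hξ.eq_of_isSinglePointRecolouring) _ _ hfg)
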